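/- arXiv:2512.08332 — 4 statements merged into one kernel-verified Lean document; each statement's English description precedes it below -/
import Mathlib

section
/- Let 𝒳 and 𝒴 be finite nonempty alphabets and let p^{(s*)} and p^{(s')} be two strictly positive conditional pmfs on 𝒴 given 𝒳. Let (X_1, Y_1), …, (X_η, Y_η) be independent pairs where each X_ℓ is uniformly distributed on 𝒳 and, given X_ℓ = x, the output Y_ℓ has distribution p^{(s*)}(·|x). Then the probability that the cumulative log-likelihood ratio fails to favor s*, namely P( ∑_{ℓ=1}^{η} log( p^{(s*)}(Y_ℓ|X_ℓ) / p^{(s')}(Y_ℓ|X_ℓ) ) ≤ 0 ), is at most ρ(s*, s')^η, where ρ(s*, s') = (1/|𝒳|) ∑_{x∈𝒳} ∑_{y∈𝒴} √( p^{(s*)}(y|x) p^{(s')}(y|x) ) is the averaged Bhattacharyya coefficient. -/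
/-- Let `p^{(s*)}, p^{(s')}` be strictly positive conditional pmfs on a finite
alphabet `Y` given a finite alphabet `X`. For `η` i.i.d. pairs `(X_ℓ, Y_ℓ)` with `X_ℓ` uniform
on `X` and `Y_ℓ ∼ p^{(s*)}(·|X_ℓ)`, the probability that the cumulative log-likelihood ratio
fails to favor `s*` is at most `ρ(s*, s')^η`, where `ρ(s*, s')` is the averaged Bhattacharyya
coefficient.  Probabilities are written as explicit sums over the finite sample space
`Fin η → X × Y` with the i.i.d. weight `∏ ℓ, (1/|X|) p^{(s*)}(y_ℓ|x_ℓ)`. -/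
theorem llr_failure_probability_le_bhattacharyya_pow
    {X Y : Type*} [Fintype X] [Fintype Y] [Nonempty X] [Nonempty Y]
    (p q : X → Y → ℝ)
    (hp0 : ∀ x y, 0 < p x y) (hq0 : ∀ x y, 0 < q x y)
    (hp1 : ∀ x, ∑ y, p x y = 1) (hq1 : ∀ x, ∑ y, q x y = 1)
    (η : ℕ) :
    ∑ ω : Fin η → X × Y,
      (if (∑ ℓ, Real.log (p (ω ℓ).1 (ω ℓ).2 / q (ω ℓ).1 (ω ℓ).2)) ≤ 0 then
        ∏ ℓ, (1 / (Fintype.card X : ℝ)) * p (ω ℓ).1 (ω ℓ).2 else 0)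
      ≤ ((1 / (Fintype.card X : ℝ)) * ∑ x, ∑ y, Real.sqrt (p x y * q x y)) ^ η := by
  have hcard : (0:ℝ) < (Fintype.card X : ℝ) := by
    exact_mod_cast Fintype.card_pos
  -- RHS rewrite
  have hRHS : ((1 / (Fintype.card X : ℝ)) * ∑ x, ∑ y, Real.sqrt (p x y * q x y)) ^ η
      = ∑ ω : Fin η → X × Y, ∏ ℓ, (1 / (Fintype.card X : ℝ)) *
          Real.sqrt (p (ω ℓ).1 (ω ℓ).2 * q (ω ℓ).1 (ω ℓ).2) := by
    rw [← Fintype.sum_pow (fun z : X × Y => (1 / (Fintype.card X : ℝ)) * Real.sqrt (p z.1 z.2 * q z.1 z.2)) η]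
    congr 1
    rw [Fintype.sum_prod_type, Finset.mul_sum]
    exact Finset.sum_congr rfl fun x _ => by rw [Finset.mul_sum]
  rw [hRHS]
  apply Finset.sum_le_sum
  intro ω _
  by_cases h : (∑ ℓ, Real.log (p (ω ℓ).1 (ω ℓ).2 / q (ω ℓ).1 (ω ℓ).2)) ≤ 0
  · rw [if_pos h]
    have hA : (0:ℝ) < ∏ ℓ, p (ω ℓ).1 (ω ℓ).2 :=
      Finset.prod_pos fun ℓ _ => hp0 _ _
    have hB : (0:ℝ) < ∏ ℓ, q (ω ℓ).1 (ω ℓ).2 :=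
      Finset.prod_pos fun ℓ _ => hq0 _ _
    -- from h: ∏ p ≤ ∏ q
    have hlog : Real.log ((∏ ℓ, p (ω ℓ).1 (ω ℓ).2) / ∏ ℓ, q (ω ℓ).1 (ω ℓ).2) ≤ 0 := by
      rw [← Finset.prod_div_distrib] at *
      rw [Real.log_prod (fun ℓ _ => (div_pos (hp0 _ _) (hq0 _ _)).ne')]
      exact h
    have hAB : (∏ ℓ, p (ω ℓ).1 (ω ℓ).2) ≤ ∏ ℓ, q (ω ℓ).1 (ω ℓ).2 := by
      have := Real.log_nonpos_iff (div_pos hA hB).le |>.mp hlog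
      calc (∏ ℓ, p (ω ℓ).1 (ω ℓ).2)
          = ((∏ ℓ, p (ω ℓ).1 (ω ℓ).2) / ∏ ℓ, q (ω ℓ).1 (ω ℓ).2) * ∏ ℓ, q (ω ℓ).1 (ω ℓ).2 := by
            field_simp
        _ ≤ 1 * ∏ ℓ, q (ω ℓ).1 (ω ℓ).2 := by
            exact mul_le_mul_of_nonneg_right this hB.le
        _ = _ := one_mul _
    -- ∏ p ≤ ∏ √(pq)
    have hsqrt : (∏ ℓ, p (ω ℓ).1 (ω ℓ).2) ≤ ∏ ℓ, Real.sqrt (p (ω ℓ).1 (ω ℓ).2 * q (ω ℓ).1 (ω ℓ).2) := by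
      have hprod : (∏ ℓ, Real.sqrt (p (ω ℓ).1 (ω ℓ).2 * q (ω ℓ).1 (ω ℓ).2))
          = Real.sqrt ((∏ ℓ, p (ω ℓ).1 (ω ℓ).2) * ∏ ℓ, q (ω ℓ).1 (ω ℓ).2) := by
        rw [← Finset.prod_mul_distrib]
        induction (Finset.univ : Finset (Fin η)) using Finset.cons_induction with
        | empty => simp
        | cons a s ha ih =>
          rw [Finset.prod_cons, Finset.prod_cons, ih]
          exact (Real.sqrt_mul (mul_pos (hp0 _ _) (hq0 _ _)).le _).symm
      rw [hprod]
      calc (∏ ℓ, p (ω ℓ).1 (ω ℓ).2)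
          = Real.sqrt ((∏ ℓ, p (ω ℓ).1 (ω ℓ).2) * ∏ ℓ, p (ω ℓ).1 (ω ℓ).2) := by
            rw [Real.sqrt_mul_self hA.le]
        _ ≤ _ := Real.sqrt_le_sqrt (mul_le_mul_of_nonneg_left hAB hA.le)
    calc (∏ ℓ, (1 / (Fintype.card X : ℝ)) * p (ω ℓ).1 (ω ℓ).2)
        = (1 / (Fintype.card X : ℝ)) ^ η * ∏ ℓ, p (ω ℓ).1 (ω ℓ).2 := by
          rw [Finset.prod_mul_distrib, Finset.prod_const, Finset.card_univ, Fintype.card_fin]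
      _ ≤ (1 / (Fintype.card X : ℝ)) ^ η * ∏ ℓ, Real.sqrt (p (ω ℓ).1 (ω ℓ).2 * q (ω ℓ).1 (ω ℓ).2) := by
          exact mul_le_mul_of_nonneg_left hsqrt (by positivity)
      _ = _ := by
          rw [Finset.prod_mul_distrib, Finset.prod_const, Finset.card_univ, Fintype.card_fin]
  · rw [if_neg h]
    positivity
end

section
/- Let 𝒳 and 𝒴 be finite nonempty alphabets, 𝒮 a finite set of states with |𝒮| ≥ 2, and for each s ∈ 𝒮 let p^{(s)} be a strictly positive conditional pmf on 𝒴 given 𝒳. Let (X_1, Y_1), …, (X_η, Y_η) be independent pairs where each X_ℓ is uniform on 𝒳 and, given X_ℓ = x, Y_ℓ ∼ p^{(s*)}(·|x) for a fixed true state s* ∈ 𝒮. Let Ŝ be any maximum-likelihood estimate, i.e., Ŝ ∈ argmax_{s∈𝒮} ∑_{ℓ=1}^{η} log p^{(s)}(Y_ℓ|X_ℓ) (with arbitrary tie-breaking). Then P(Ŝ ≠ s*) ≤ (|𝒮| − 1) ρ^η, where ρ = max_{s₁ ≠ s₂ ∈ 𝒮} ρ(s₁, s₂) is the maximum averaged Bhattacharyya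 coefficient. -/
private lemma sqrt_prod' {ι : Type*} (s : Finset ι) (f : ι → ℝ)
    (hf : ∀ i ∈ s, 0 ≤ f i) :
    Real.sqrt (∏ i ∈ s, f i) = ∏ i ∈ s, Real.sqrt (f i) := by
  induction s using Finset.cons_induction with
  | empty => simp
  | cons a s ha ih =>
    rw [Finset.prod_cons, Finset.prod_cons,
      Real.sqrt_mul (hf a (Finset.mem_cons_self a s)),
      ih (fun i hi => hf i (Finset.mem_cons_of_mem hi))]

/-- (Lemma 1 of the paper.)  With `η` i.i.d. pairs `(X_ℓ, Y_ℓ)`, `X_ℓ` uniform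
on a finite alphabet `X` and `Y_ℓ ∼ p^{(s*)}(·|X_ℓ)` for a true state `s*` in a finite state set
`S` with `|S| ≥ 2`, any maximum-likelihood estimate `Ŝ(ω) ∈ argmax_s ∑_ℓ log p^{(s)}(Y_ℓ|X_ℓ)`
satisfies `P(Ŝ ≠ s*) ≤ (|S| − 1) ρ^η`, where `ρ = max_{s₁ ≠ s₂} ρ(s₁, s₂)` is the maximum
averaged Bhattacharyya coefficient. -/
theorem mle_error_probability_bound
    {X Y S : Type*} [Fintype X] [Fintype Y] [Fintype S]
    [Nonempty X] [Nonempty Y] [DecidableEq S]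
    (hS : 2 ≤ Fintype.card S)
    (p : S → X → Y → ℝ)
    (hp0 : ∀ s x y, 0 < p s x y)
    (hp1 : ∀ s x, ∑ y, p s x y = 1)
    (sstar : S) (η : ℕ)
    (shat : (Fin η → X × Y) → S)
    (hml : ∀ (ω : Fin η → X × Y) (s : S),
      (∑ ℓ, Real.log (p s (ω ℓ).1 (ω ℓ).2)) ≤ ∑ ℓ, Real.log (p (shat ω) (ω ℓ).1 (ω ℓ).2))
    (ρ : ℝ)
    (hρ : IsGreatest {r | ∃ s₁ s₂ : S, s₁ ≠ s₂ ∧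
        r = (1 / (Fintype.card X : ℝ)) * ∑ x, ∑ y, Real.sqrt (p s₁ x y * p s₂ x y)} ρ) :
    ∑ ω : Fin η → X × Y,
      (if shat ω ≠ sstar then
        ∏ ℓ, (1 / (Fintype.card X : ℝ)) * p sstar (ω ℓ).1 (ω ℓ).2 else 0)
      ≤ ((Fintype.card S : ℝ) - 1) * ρ ^ η := by
  classical
  set cX : ℝ := (Fintype.card X : ℝ) with hcX
  have hcX0 : 0 < cX := by
    have : 0 < Fintype.card X := Fintype.card_pos
    rw [hcX]; exact_mod_cast this
  set g : S → X × Y → ℝ := fun s z => (1 / cX) * Real.sqrt (p sstar z.1 z.2 * p s z.1 z.2)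
    with hg
  have hg0 : ∀ s z, 0 ≤ g s z := fun s z => by
    apply mul_nonneg (by positivity) (Real.sqrt_nonneg _)
  -- Step A : pointwise bound
  have stepA : ∀ ω : Fin η → X × Y,
      (if shat ω ≠ sstar then ∏ ℓ, (1 / cX) * p sstar (ω ℓ).1 (ω ℓ).2 else 0)
      ≤ ∑ s' ∈ Finset.univ.erase sstar,
          (if shat ω = s' then ∏ ℓ, g s' (ω ℓ) else 0) := by
    intro ω
    by_cases h : shat ω = sstar
    · simp only [h, ne_eq, not_true_eq_false, if_false]
      refine Finset.sum_nonneg fun s' _ => ?_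
      split
      · exact Finset.prod_nonneg fun ℓ _ => hg0 _ _
      · exact le_rfl
    · rw [if_pos h]
      have hmem : shat ω ∈ Finset.univ.erase sstar :=
        Finset.mem_erase.2 ⟨h, Finset.mem_univ _⟩
      have hsum : ∑ s' ∈ Finset.univ.erase sstar,
          (if shat ω = s' then ∏ ℓ, g s' (ω ℓ) else 0) = ∏ ℓ, g (shat ω) (ω ℓ) := by
        rw [Finset.sum_eq_single_of_mem (shat ω) hmem]
        · simp
        · intro b _ hb
          rw [if_neg (fun hc => hb hc.symm)]
      rw [hsum]
      -- products of positive numbers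
      set a : Fin η → ℝ := fun ℓ => p sstar (ω ℓ).1 (ω ℓ).2 with ha
      set b : Fin η → ℝ := fun ℓ => p (shat ω) (ω ℓ).1 (ω ℓ).2 with hb
      have ha0 : ∀ ℓ, 0 < a ℓ := fun ℓ => hp0 _ _ _
      have hb0 : ∀ ℓ, 0 < b ℓ := fun ℓ => hp0 _ _ _
      have hprod : ∏ ℓ, a ℓ ≤ ∏ ℓ, b ℓ := by
        have hlog := hml ω sstar
        have h1 : Real.exp (∑ ℓ, Real.log (a ℓ)) ≤ Real.exp (∑ ℓ, Real.log (b ℓ)) :=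
          Real.exp_le_exp.2 hlog
        rwa [Real.exp_sum, Real.exp_sum,
          Finset.prod_congr rfl (fun ℓ _ => Real.exp_log (ha0 ℓ)),
          Finset.prod_congr rfl (fun ℓ _ => Real.exp_log (hb0 ℓ))] at h1
      have key : ∏ ℓ, a ℓ ≤ ∏ ℓ, Real.sqrt (a ℓ * b ℓ) := by
        have h2 : ∏ ℓ, Real.sqrt (a ℓ * b ℓ) = Real.sqrt ((∏ ℓ, a ℓ) * ∏ ℓ, b ℓ) := by
          rw [← Finset.prod_mul_distrib,
            sqrt_prod' _ _ (fun ℓ _ => le_of_lt (mul_pos (ha0 ℓ) (hb0 ℓ)))]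
        rw [h2]
        have hpa : 0 ≤ ∏ ℓ, a ℓ := Finset.prod_nonneg fun ℓ _ => (ha0 ℓ).le
        calc ∏ ℓ, a ℓ = Real.sqrt ((∏ ℓ, a ℓ) * ∏ ℓ, a ℓ) := (Real.sqrt_mul_self hpa).symm
          _ ≤ Real.sqrt ((∏ ℓ, a ℓ) * ∏ ℓ, b ℓ) :=
            Real.sqrt_le_sqrt (mul_le_mul_of_nonneg_left hprod hpa)
      calc ∏ ℓ, (1 / cX) * a ℓ = (1 / cX) ^ η * ∏ ℓ, a ℓ := by
            rw [Finset.prod_mul_distrib, Finset.prod_const, Finset.card_univ,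
              Fintype.card_fin]
        _ ≤ (1 / cX) ^ η * ∏ ℓ, Real.sqrt (a ℓ * b ℓ) := by
            apply mul_le_mul_of_nonneg_left key (by positivity)
        _ = ∏ ℓ, g (shat ω) (ω ℓ) := by
            rw [hg]
            rw [Finset.prod_mul_distrib, Finset.prod_const, Finset.card_univ,
              Fintype.card_fin]
  -- sum the pointwise bound over ω, then swap sums
  have step1 : ∑ ω : Fin η → X × Y,
      (if shat ω ≠ sstar then ∏ ℓ, (1 / cX) * p sstar (ω ℓ).1 (ω ℓ).2 else 0)
      ≤ ∑ s' ∈ Finset.univ.erase sstar, ∑ ω : Fin η → X × Y,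
          (if shat ω = s' then ∏ ℓ, g s' (ω ℓ) else 0) := by
    rw [Finset.sum_comm]
    exact Finset.sum_le_sum fun ω _ => stepA ω
  refine le_trans step1 ?_
  -- bound each inner sum by ρ^η
  have hρ0 : 0 ≤ ρ := by
    obtain ⟨s₁, s₂, hne, hr⟩ := hρ.1
    have : (0:ℝ) ≤ (1 / cX) * ∑ x, ∑ y, Real.sqrt (p s₁ x y * p s₂ x y) := by
      apply mul_nonneg (by positivity)
      exact Finset.sum_nonneg fun x _ => Finset.sum_nonneg fun y _ => Real.sqrt_nonneg _
    rw [hr]; exact this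
  have step2 : ∀ s' ∈ Finset.univ.erase sstar,
      ∑ ω : Fin η → X × Y, (if shat ω = s' then ∏ ℓ, g s' (ω ℓ) else 0) ≤ ρ ^ η := by
    intro s' hs'
    have hne : sstar ≠ s' := fun hc => (Finset.mem_erase.1 hs').1 hc.symm
    have h3 : ∑ ω : Fin η → X × Y, (if shat ω = s' then ∏ ℓ, g s' (ω ℓ) else 0)
        ≤ ∑ ω : Fin η → X × Y, ∏ ℓ, g s' (ω ℓ) := by
      refine Finset.sum_le_sum fun ω _ => ?_
      split
      · exact le_rfl
      · exact Finset.prod_nonneg fun ℓ _ => hg0 _ _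
    have h4 : ∑ ω : Fin η → X × Y, ∏ ℓ, g s' (ω ℓ) = (∑ z : X × Y, g s' z) ^ η := by
      rw [← Fintype.prod_sum (fun (_ : Fin η) (z : X × Y) => g s' z),
        Finset.prod_const, Finset.card_univ, Fintype.card_fin]
    have h5 : ∑ z : X × Y, g s' z ≤ ρ := by
      apply hρ.2
      refine ⟨sstar, s', hne, ?_⟩
      rw [Fintype.sum_prod_type, hg]
      simp only
      rw [Finset.mul_sum]
      exact Finset.sum_congr rfl fun x _ => by rw [Finset.mul_sum]
    have h6 : 0 ≤ ∑ z : X × Y, g s' z := Finset.sum_nonneg fun z _ => hg0 _ _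
    calc ∑ ω : Fin η → X × Y, (if shat ω = s' then ∏ ℓ, g s' (ω ℓ) else 0)
        ≤ (∑ z : X × Y, g s' z) ^ η := by rw [← h4]; exact h3
      _ ≤ ρ ^ η := pow_le_pow_left₀ h6 h5 η
  calc ∑ s' ∈ Finset.univ.erase sstar, ∑ ω : Fin η → X × Y,
          (if shat ω = s' then ∏ ℓ, g s' (ω ℓ) else 0)
      ≤ ∑ _s' ∈ Finset.univ.erase sstar, ρ ^ η := Finset.sum_le_sum step2
    _ = ((Fintype.card S : ℝ) - 1) * ρ ^ η := by
        rw [Finset.sum_const, Finset.card_erase_of_mem (Finset.mem_univ _),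
          Finset.card_univ, nsmul_eq_mul]
        congr 1
        have h1 : 1 ≤ Fintype.card S := le_trans (by norm_num) hS
        push_cast [Nat.cast_sub h1]
        ring
end

section
/- Let (Ω, 𝔉, P) be a probability space with filtration (𝔉_j)_{j≥η} for some integer η ≥ 1, and let (ℓ_j)_{j>η} be strictly positive random variables with ℓ_j 𝔉_j-measurable and E[ℓ_j | 𝔉_{j−1}] = 1 almost surely. Define R_η = 1, W_η = 0, and for j > η, R_j = (R_{j−1} + 1)·ℓ_j and W_j = max(W_{j−1}, 0) + log ℓ_j; assume each R_j is integrable. Let b > 0 and let N = inf{ j > η : W_j ≥ b } be the first time the CuSum statistic crosses level b. If N < ∞ almost surely, then E[N] ≥ exp(b) + η − 1; in particular E[N] ≥ exp(b). (This yields the false alarm rate bound 1/E[N] ≤ exp(−b).) -/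
open MeasureTheory
open Filter Topology
open scoped ENNReal

/-- (False alarm rate bound, Lemma 2 of the paper.)  On a filtered probability
space with indices starting at `η ≥ 1`, let `ℓ_j` (`j > η`) be strictly positive,
`𝔉_j`-measurable with `E[ℓ_j | 𝔉_{j−1}] = 1` a.s.  With the CuSum statistic
`W_η = 0`, `W_{j+1} = max(W_j, 0) + log ℓ_{j+1}` and the modified Shiryaev–Roberts statistic
`R_η = 1`, `R_{j+1} = (R_j + 1)·ℓ_{j+1}` (each `R_j` integrable), let
`N = inf{j > η : W_j ≥ b}` for a level `b > 0`.  If `N < ∞` a.s., then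
`E[N] ≥ exp(b) + η − 1`, and in particular `E[N] ≥ exp(b)`. -/
theorem cusum_false_alarm_bound
    {Ω : Type*} {m0 : MeasurableSpace Ω} {μ : Measure Ω} [IsProbabilityMeasure μ]
    (η : ℕ) (hη : 1 ≤ η)
    (ℱ : Filtration ℕ m0)
    (ℓ : ℕ → Ω → ℝ)
    (hmeas : ∀ j, η < j → StronglyMeasurable[ℱ j] (ℓ j))
    (hpos : ∀ j, η < j → ∀ ω, 0 < ℓ j ω)
    (hcond : ∀ j, η < j → μ[ℓ j | ℱ (j - 1)] =ᵐ[μ] fun _ => (1 : ℝ))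
    (R W : ℕ → Ω → ℝ)
    (hRη : ∀ ω, R η ω = 1) (hWη : ∀ ω, W η ω = 0)
    (hRrec : ∀ j, η ≤ j → ∀ ω, R (j + 1) ω = (R j ω + 1) * ℓ (j + 1) ω)
    (hWrec : ∀ j, η ≤ j → ∀ ω, W (j + 1) ω = max (W j ω) 0 + Real.log (ℓ (j + 1) ω))
    (hint : ∀ j, Integrable (R j) μ)
    (b : ℝ) (hb : 0 < b)
    (N : Ω → ℕ)
    (hN : ∀ ω, N ω = sInf {j | η < j ∧ b ≤ W j ω})
    (hfin : ∀ᵐ ω ∂μ, ∃ j, η < j ∧ b ≤ W j ω) :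
    ENNReal.ofReal (Real.exp b + η - 1) ≤ ∫⁻ ω, (N ω : ℝ≥0∞) ∂μ ∧
    ENNReal.ofReal (Real.exp b) ≤ ∫⁻ ω, (N ω : ℝ≥0∞) ∂μ := by
  classical
  -- measurability of W
  have hWmeas : ∀ j, η ≤ j → StronglyMeasurable[ℱ j] (W j) := by
    intro j hj
    induction j, hj using Nat.le_induction with
    | base =>
      have : W η = fun _ => (0 : ℝ) := funext hWη
      rw [this]; exact stronglyMeasurable_const
    | succ n hn ih =>
      have : W (n + 1) = fun ω => max (W n ω) 0 + Real.log (ℓ (n + 1) ω) :=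
        funext (hWrec n hn)
      rw [this]
      exact ((((ih.mono (ℱ.mono (Nat.le_succ n))).measurable.max measurable_const).add
        ((hmeas (n + 1) (Nat.lt_succ_of_le hn)).measurable.log)).stronglyMeasurable)
  -- measurability of R
  have hRmeas : ∀ j, η ≤ j → StronglyMeasurable[ℱ j] (R j) := by
    intro j hj
    induction j, hj using Nat.le_induction with
    | base =>
      have : R η = fun _ => (1 : ℝ) := funext hRη
      rw [this]; exact stronglyMeasurable_const
    | succ n hn ih =>
      have : R (n + 1) = fun ω => (R n ω + 1) * ℓ (n + 1) ω := funext (hRrec n hn)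
      rw [this]
      exact ((ih.mono (ℱ.mono (Nat.le_succ n))).add stronglyMeasurable_const).mul
        (hmeas (n + 1) (Nat.lt_succ_of_le hn))
  -- positivity of R
  have hRpos : ∀ j, η ≤ j → ∀ ω, 0 < R j ω := by
    intro j hj
    induction j, hj using Nat.le_induction with
    | base => intro ω; rw [hRη]; norm_num
    | succ n hn ih =>
      intro ω
      rw [hRrec n hn]
      exact mul_pos (by linarith [ih ω]) (hpos (n + 1) (Nat.lt_succ_of_le hn) ω)
  -- R dominates exp W
  have hRW : ∀ j, η ≤ j → ∀ ω, Real.exp (W j ω) ≤ R j ω := by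
    intro j hj
    induction j, hj using Nat.le_induction with
    | base => intro ω; rw [hRη, hWη]; simp
    | succ n hn ih =>
      intro ω
      have hl := hpos (n + 1) (Nat.lt_succ_of_le hn) ω
      rw [hRrec n hn, hWrec n hn, Real.exp_add, Real.exp_log hl]
      have h1 : Real.exp (max (W n ω) 0) ≤ R n ω + 1 := by
        rcases le_total (W n ω) 0 with h | h
        · rw [max_eq_right h]; simp; linarith [hRpos n hn ω]
        · rw [max_eq_left h]; linarith [ih ω]
      exact mul_le_mul_of_nonneg_right h1 hl.le
  -- integrability of ℓ
  have hlint : ∀ j, η < j → Integrable (ℓ j) μ := by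
    intro j hj
    by_contra h
    have h0 := hcond j hj
    rw [condExp_of_not_integrable h] at h0
    have h1 : ∀ᵐ _ω ∂μ, (0 : ℝ) = 1 := h0
    obtain ⟨ω, hω⟩ := h1.exists
    norm_num at hω
  -- the conditional expectation of R (n+1)
  have hcondR : ∀ n, η ≤ n → μ[R (n + 1)|ℱ n] =ᵐ[μ] fun ω => R n ω + 1 := by
    intro n hn
    have hfun : R (n + 1) = (fun ω => R n ω + 1) * ℓ (n + 1) := funext (hRrec n hn)
    have hsm : StronglyMeasurable[ℱ n] (fun ω => R n ω + 1) :=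
      (hRmeas n hn).add stronglyMeasurable_const
    have hprod : Integrable ((fun ω => R n ω + 1) * ℓ (n + 1)) μ := by
      rw [← hfun]; exact hint (n + 1)
    have h1 := condExp_mul_of_stronglyMeasurable_left hsm hprod
      (hlint (n + 1) (Nat.lt_succ_of_le hn))
    have h2 := hcond (n + 1) (Nat.lt_succ_of_le hn)
    simp only [Nat.add_sub_cancel] at h2
    rw [hfun]
    refine h1.trans ?_
    filter_upwards [h2] with ω hω
    simp [hω]
  -- the sets B n
  set B : ℕ → Set Ω := fun n => {ω | ∀ j, η < j → j ≤ n → W j ω < b} with hBdef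
  have hBF : ∀ n, η ≤ n → MeasurableSet[ℱ n] (B n) := by
    intro n hn
    have : B n = ⋂ j, ⋂ (_ : η < j), ⋂ (_ : j ≤ n), {ω | W j ω < b} := by
      ext ω; simp [hBdef]
    rw [this]
    refine MeasurableSet.iInter fun j => MeasurableSet.iInter fun h1 =>
      MeasurableSet.iInter fun h2 => ?_
    have : Measurable[ℱ n] (W j) := ((hWmeas j h1.le).measurable).mono (ℱ.mono h2) le_rfl
    exact measurableSet_lt this measurable_const
  have hBm0 : ∀ n, MeasurableSet (B n) := by
    intro n
    rcases le_or_gt η n with hn | hn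
    · exact ℱ.le n _ (hBF n hn)
    · have : B n = Set.univ := by
        ext ω; simp only [hBdef, Set.mem_setOf_eq, Set.mem_univ, iff_true]
        intro j h1 h2; omega
      rw [this]; exact MeasurableSet.univ
  have hBanti : Antitone B := by
    intro m n hmn ω hω j h1 h2
    exact hω j h1 (h2.trans hmn)
  -- pointwise facts about N
  have hNmem : ∀ ω, (∃ j, η < j ∧ b ≤ W j ω) → η < N ω ∧ b ≤ W (N ω) ω := by
    intro ω hω
    have := Nat.sInf_mem (s := {j | η < j ∧ b ≤ W j ω}) hω
    rw [← hN ω] at this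
    exact this
  have hNgt : ∀ ω, (∃ j, η < j ∧ b ≤ W j ω) → ∀ n, (n < N ω ↔ ω ∈ B n) := by
    intro ω hω n
    constructor
    · intro h j hj1 hj2
      by_contra hc
      push_neg at hc
      have : N ω ≤ j := by rw [hN ω]; exact Nat.sInf_le ⟨hj1, hc⟩
      omega
    · intro hB'
      by_contra h
      push_neg at h
      obtain ⟨h1, h2⟩ := hNmem ω hω
      exact absurd h2 (not_le.2 (hB' (N ω) h1 h))
  -- telescoping identity for stopped R
  have hstopR : ∀ ω, (∃ j, η < j ∧ b ≤ W j ω) → ∀ n, η ≤ n →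
      R (min (N ω) n) ω = 1 + ∑ j ∈ Finset.Ico η n,
        Set.indicator (B j) (fun ω' => R (j + 1) ω' - R j ω') ω := by
    intro ω hω n hn
    have hNη := (hNmem ω hω).1
    induction n, hn using Nat.le_induction with
    | base =>
      rw [min_eq_right hNη.le, hRη]
      simp
    | succ n hn ih =>
      rw [Finset.sum_Ico_succ_top hn, ← add_assoc, ← ih]
      by_cases hc : n < N ω
      · have hmem := (hNgt ω hω n).1 hc
        rw [min_eq_right hc, min_eq_right hc.le, Set.indicator_of_mem hmem]
        ring
      · push_neg at hc
        rw [min_eq_left (hc.trans (Nat.le_succ n)), min_eq_left hc,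
          Set.indicator_of_notMem (fun h => hc.not_gt ((hNgt ω hω n).2 h))]
        ring
  -- telescoping identity for stopped time (naturals)
  have hstopN : ∀ ω, (∃ j, η < j ∧ b ≤ W j ω) → ∀ n, η ≤ n →
      min (N ω) n = η + ∑ j ∈ Finset.Ico η n, (if ω ∈ B j then 1 else 0) := by
    intro ω hω n hn
    have hNη := (hNmem ω hω).1
    induction n, hn using Nat.le_induction with
    | base => rw [min_eq_right hNη.le]; simp
    | succ n hn ih =>
      rw [Finset.sum_Ico_succ_top hn, ← add_assoc, ← ih]
      by_cases hc : n < N ω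
      · rw [min_eq_right hc, min_eq_right hc.le, if_pos ((hNgt ω hω n).1 hc)]
      · push_neg at hc
        rw [min_eq_left (hc.trans (Nat.le_succ n)), min_eq_left hc,
          if_neg (fun h => hc.not_gt ((hNgt ω hω n).2 h))]
        simp
  -- set integral over B j of the increment
  have hSetInt : ∀ j, η ≤ j → ∫ ω in B j, (R (j + 1) ω - R j ω) ∂μ = (μ (B j)).toReal := by
    intro j hj
    have hB := hBF j hj
    have h1 : ∫ ω in B j, R (j + 1) ω ∂μ = ∫ ω in B j, (R j ω + 1) ∂μ := by
      rw [← setIntegral_condExp (ℱ.le j) (hint (j + 1)) hB]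
      exact setIntegral_congr_ae (hBm0 j) ((hcondR j hj).mono fun ω hω _ => hω)
    rw [integral_sub ((hint (j + 1)).integrableOn) ((hint j).integrableOn), h1,
      integral_add ((hint j).integrableOn) integrableOn_const]
    simp [integral_const, Measure.restrict_apply_univ, measureReal_def]
  -- integral of stopped R
  have hIndInt : ∀ j, η ≤ j →
      Integrable (Set.indicator (B j) (fun ω => R (j + 1) ω - R j ω)) μ :=
    fun j _ => ((hint (j + 1)).sub (hint j)).indicator (hBm0 j)
  have hFn : ∀ n, η ≤ n → ∫ ω, R (min (N ω) n) ω ∂μ =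
      1 + ∑ j ∈ Finset.Ico η n, (μ (B j)).toReal := by
    intro n hn
    have hcongr : (fun ω => R (min (N ω) n) ω) =ᵐ[μ]
        (fun ω => 1 + ∑ j ∈ Finset.Ico η n,
          Set.indicator (B j) (fun ω' => R (j + 1) ω' - R j ω') ω) := by
      filter_upwards [hfin] with ω hω using hstopR ω hω n hn
    rw [integral_congr_ae hcongr, integral_add (integrable_const 1)
      (integrable_finset_sum _ fun j hj => hIndInt j (Finset.mem_Ico.1 hj).1),
      integral_finset_sum _ fun j hj => hIndInt j (Finset.mem_Ico.1 hj).1]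
    simp only [integral_const, probReal_univ, smul_eq_mul, one_mul]
    congr 1
    refine Finset.sum_congr rfl fun j hj => ?_
    rw [integral_indicator (hBm0 j)]
    exact hSetInt j (Finset.mem_Ico.1 hj).1
  -- lower bound by exp b on the complement of B n
  have hkey : ∀ n, η ≤ n →
      Real.exp b * (μ (B n)ᶜ).toReal ≤ 1 + ∑ j ∈ Finset.Ico η n, (μ (B j)).toReal := by
    intro n hn
    have hle : (Set.indicator (B n)ᶜ (fun _ => Real.exp b)) ≤ᵐ[μ]
        (fun ω => 1 + ∑ j ∈ Finset.Ico η n,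
          Set.indicator (B j) (fun ω' => R (j + 1) ω' - R j ω') ω) := by
      filter_upwards [hfin] with ω hω
      rw [← hstopR ω hω n hn]
      by_cases hc : N ω ≤ n
      · have hnB : ω ∉ B n := fun h => absurd ((hNgt ω hω n).2 h) (not_lt.2 hc)
        rw [Set.indicator_of_mem (by exact hnB)]
        obtain ⟨h1, h2⟩ := hNmem ω hω
        rw [min_eq_left hc]
        calc Real.exp b ≤ Real.exp (W (N ω) ω) := Real.exp_le_exp.2 h2
          _ ≤ R (N ω) ω := hRW (N ω) h1.le ω
      · push_neg at hc
        have hmem : ω ∈ B n := (hNgt ω hω n).1 hc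
        rw [Set.indicator_of_notMem (by simpa using hmem), min_eq_right hc.le]
        exact (hRpos n hn ω).le
    have hg_int : Integrable (fun ω => 1 + ∑ j ∈ Finset.Ico η n,
        Set.indicator (B j) (fun ω' => R (j + 1) ω' - R j ω') ω) μ :=
      (integrable_const 1).add (integrable_finset_sum _ fun j hj =>
        hIndInt j (Finset.mem_Ico.1 hj).1)
    have h3 : ∫ ω, (1 + ∑ j ∈ Finset.Ico η n,
        Set.indicator (B j) (fun ω' => R (j + 1) ω' - R j ω') ω) ∂μ =
        1 + ∑ j ∈ Finset.Ico η n, (μ (B j)).toReal := by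
      rw [← hFn n hn]
      refine (integral_congr_ae ?_).symm
      filter_upwards [hfin] with ω hω using hstopR ω hω n hn
    have h2 := integral_mono_ae ((integrable_const (Real.exp b)).indicator (hBm0 n).compl)
      hg_int hle
    rw [integral_indicator_const _ (hBm0 n).compl, h3, smul_eq_mul, mul_comm] at h2
    exact h2
  -- lintegral lower bound
  have hlin : ∀ n, η ≤ n →
      (η : ℝ≥0∞) + ∑ j ∈ Finset.Ico η n, μ (B j) ≤ ∫⁻ ω, (N ω : ℝ≥0∞) ∂μ := by
    intro n hn
    have hcongr : (fun ω => ((min (N ω) n : ℕ) : ℝ≥0∞)) =ᵐ[μ]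
        (fun ω => (η : ℝ≥0∞) + ∑ j ∈ Finset.Ico η n,
          Set.indicator (B j) (fun _ => (1 : ℝ≥0∞)) ω) := by
      filter_upwards [hfin] with ω hω
      rw [hstopN ω hω n hn]
      push_cast [Set.indicator_apply]
      norm_cast
    calc (η : ℝ≥0∞) + ∑ j ∈ Finset.Ico η n, μ (B j)
        = ∫⁻ ω, ((η : ℝ≥0∞) + ∑ j ∈ Finset.Ico η n,
            Set.indicator (B j) (fun _ => (1 : ℝ≥0∞)) ω) ∂μ := by
          rw [lintegral_add_left measurable_const, lintegral_const, measure_univ, mul_one,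
            lintegral_finset_sum _ fun j _ => measurable_const.indicator (hBm0 j)]
          congr 1
          refine Finset.sum_congr rfl fun j _ => ?_
          rw [lintegral_indicator (hBm0 j) _, setLIntegral_const, one_mul]
      _ = ∫⁻ ω, ((min (N ω) n : ℕ) : ℝ≥0∞) ∂μ := (lintegral_congr_ae hcongr).symm
      _ ≤ ∫⁻ ω, (N ω : ℝ≥0∞) ∂μ :=
          lintegral_mono fun ω => by exact Nat.cast_le.2 (min_le_left _ _)
  -- convert to ofReal form
  have hfinB : ∀ j, μ (B j) ≠ ∞ := fun j => measure_ne_top μ _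
  have hofReal : ∀ n, η ≤ n →
      ENNReal.ofReal ((η : ℝ) + Real.exp b * (μ (B n)ᶜ).toReal - 1) ≤
        ∫⁻ ω, (N ω : ℝ≥0∞) ∂μ := by
    intro n hn
    refine le_trans ?_ (hlin n hn)
    have hsum : (∑ j ∈ Finset.Ico η n, μ (B j)) =
        ENNReal.ofReal (∑ j ∈ Finset.Ico η n, (μ (B j)).toReal) := by
      rw [ENNReal.ofReal_sum_of_nonneg fun j _ => ENNReal.toReal_nonneg]
      exact (Finset.sum_congr rfl fun j _ => (ENNReal.ofReal_toReal (hfinB j)).symm)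
    rw [hsum, ← ENNReal.ofReal_natCast η, ← ENNReal.ofReal_add (by positivity)
      (Finset.sum_nonneg fun j _ => ENNReal.toReal_nonneg)]
    refine ENNReal.ofReal_le_ofReal ?_
    have := hkey n hn
    linarith
  -- μ (B n)ᶜ tends to 1
  have hU : μ (⋃ n, (B n)ᶜ) = 1 := by
    have hUeq : (⋃ n, (B n)ᶜ) = {ω | ∃ j, η < j ∧ b ≤ W j ω} := by
      ext ω
      simp only [Set.mem_iUnion, Set.mem_compl_iff, hBdef, Set.mem_setOf_eq]
      constructor
      · rintro ⟨n, hn⟩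
        push_neg at hn
        obtain ⟨j, h1, _, h3⟩ := hn
        exact ⟨j, h1, h3⟩
      · rintro ⟨j, h1, h2⟩
        exact ⟨j, by push_neg; exact ⟨j, h1, le_rfl, h2⟩⟩
    rw [hUeq]
    have hmeasU : MeasurableSet {ω | ∃ j, η < j ∧ b ≤ W j ω} := by
      have : {ω | ∃ j, η < j ∧ b ≤ W j ω} = ⋃ j, ⋃ (_ : η < j), {ω | b ≤ W j ω} := by
        ext ω; simp
      rw [this]
      refine MeasurableSet.iUnion fun j => MeasurableSet.iUnion fun h1 => ?_
      exact measurableSet_le measurable_const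
        (((hWmeas j h1.le).measurable).mono (ℱ.le j) le_rfl)
    have h0 : μ {ω | ∃ j, η < j ∧ b ≤ W j ω}ᶜ = 0 := by
      rw [Set.compl_setOf]
      exact ae_iff.1 hfin
    have h4 := measure_compl hmeasU.compl (measure_ne_top μ _)
    rw [compl_compl, h0, measure_univ, tsub_zero] at h4
    exact h4
  have htend : Tendsto (fun n => (μ (B n)ᶜ).toReal) atTop (𝓝 1) := by
    have h1 : Tendsto (fun n => μ (B n)ᶜ) atTop (𝓝 (1 : ℝ≥0∞)) := by
      have h2 := tendsto_measure_iUnion_atTop (μ := μ) (s := fun n => (B n)ᶜ)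
        (fun m n hmn => Set.compl_subset_compl.2 (hBanti hmn))
      simpa only [Function.comp_def, hU] using h2
    have := (ENNReal.tendsto_toReal (by norm_num : (1 : ℝ≥0∞) ≠ ∞)).comp h1
    simpa [Function.comp_def] using this
  -- final limit argument
  have hmain : ENNReal.ofReal (Real.exp b + η - 1) ≤ ∫⁻ ω, (N ω : ℝ≥0∞) ∂μ := by
    have htend2 : Tendsto (fun n => ENNReal.ofReal ((η : ℝ) + Real.exp b * (μ (B n)ᶜ).toReal - 1))
        atTop (𝓝 (ENNReal.ofReal ((η : ℝ) + Real.exp b * 1 - 1))) := by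
      refine (ENNReal.continuous_ofReal.tendsto _).comp ?_
      exact ((tendsto_const_nhds.add (tendsto_const_nhds.mul htend)).sub tendsto_const_nhds)
    have hev : ∀ᶠ n in atTop, ENNReal.ofReal ((η : ℝ) + Real.exp b * (μ (B n)ᶜ).toReal - 1) ≤
        ∫⁻ ω, (N ω : ℝ≥0∞) ∂μ := by
      filter_upwards [eventually_ge_atTop η] with n hn using hofReal n hn
    have := le_of_tendsto htend2 hev
    convert this using 2
    · rfl
    · ring
  refine ⟨hmain, le_trans (ENNReal.ofReal_le_ofReal ?_) hmain⟩
  have : (1 : ℝ) ≤ η := by exact_mod_cast hη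
  linarith
end

section
/- Let 𝒮 be a finite nonempty set, let p be a probability mass function on 𝒮, and fix s* ∈ 𝒮. Let e = 1 − p(s*) be the probability of missing s*. Then the Shannon entropy satisfies H(p) = ∑_{s∈𝒮} −p(s) log p(s) ≤ h₂(e) + e·log|𝒮|, where h₂(e) = −e log e − (1−e) log(1−e) is the binary entropy function (with the convention 0·log 0 = 0). -/
/-- (Fano-type entropy bound.)  For a pmf `p` on a finite nonempty set `S`,
a distinguished `s* ∈ S`, and `e = 1 − p(s*)`, the Shannon entropy satisfies
`H(p) ≤ h₂(e) + e·log|S|`, where `h₂` is the binary entropy function (with `0·log 0 = 0`,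
as encoded by `Real.negMulLog`). -/
theorem entropy_le_binaryEntropy_add_error_log_card
    {S : Type*} [Fintype S] [Nonempty S]
    (p : S → ℝ) (hp0 : ∀ s, 0 ≤ p s) (hp1 : ∑ s, p s = 1)
    (sstar : S) (e : ℝ) (he : e = 1 - p sstar) :
    ∑ s, Real.negMulLog (p s) ≤
      (Real.negMulLog e + Real.negMulLog (1 - e)) + e * Real.log (Fintype.card S) := by
  classical
  set T : Finset S := Finset.univ.erase sstar with hT
  have hsplit : ∑ s, Real.negMulLog (p s)
      = Real.negMulLog (p sstar) + ∑ s ∈ T, Real.negMulLog (p s) := by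
    rw [hT]
    exact (Finset.add_sum_erase _ (fun s => Real.negMulLog (p s)) (Finset.mem_univ sstar)).symm
  have hesum : e = ∑ s ∈ T, p s := by
    rw [he, ← hp1, hT, ← Finset.add_sum_erase _ _ (Finset.mem_univ sstar)]
    ring
  have he0 : 0 ≤ e := by
    rw [hesum]; exact Finset.sum_nonneg fun s _ => hp0 s
  have h1e : 1 - e = p sstar := by rw [he]; ring
  rw [hsplit, h1e]
  have key : ∑ s ∈ T, Real.negMulLog (p s)
      ≤ Real.negMulLog e + e * Real.log (Fintype.card S) := by
    rcases eq_or_ne (Fintype.card S) 1 with hcard | hcard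
    · -- then T is empty and e = 0
      have hTe : T = ∅ := by
        rw [hT]
        have : (Finset.univ : Finset S).card = 1 := by simpa using hcard
        obtain ⟨a, ha⟩ := Finset.card_eq_one.mp this
        rw [ha]
        have : sstar = a := by
          have := Finset.mem_univ sstar; rw [ha] at this; simpa using this
        simp [this]
      have he0' : e = 0 := by rw [hesum, hTe]; simp
      simp [hTe, he0']
    · -- card S ≥ 2
      have hn2 : 2 ≤ Fintype.card S := by
        have := Fintype.card_pos (α := S)
        omega
      set n : ℕ := T.card with hn
      have hncard : n = Fintype.card S - 1 := by
        rw [hn, hT, Finset.card_erase_of_mem (Finset.mem_univ sstar), Finset.card_univ]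
      have hn1 : 1 ≤ n := by omega
      have hnpos : (0 : ℝ) < (n : ℝ) := by positivity
      have hjensen : ∑ s ∈ T, (1 / (n : ℝ)) • Real.negMulLog (p s)
          ≤ Real.negMulLog (∑ s ∈ T, (1 / (n : ℝ)) • p s) := by
        apply Real.concaveOn_negMulLog.le_map_sum
        · intro i _; positivity
        · rw [Finset.sum_const, hn, nsmul_eq_mul]
          field_simp
          exact div_self (show (0:ℝ) < (T.card : ℝ) from hnpos).ne'
        · intro i _; exact hp0 i
      have havg : ∑ s ∈ T, (1 / (n : ℝ)) • p s = e / n := by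
        rw [← Finset.smul_sum, ← hesum]; simp [div_eq_inv_mul]
      rw [← Finset.smul_sum, havg] at hjensen
      have h2 : ∑ s ∈ T, Real.negMulLog (p s) ≤ (n : ℝ) * Real.negMulLog (e / n) := by
        have := mul_le_mul_of_nonneg_left hjensen hnpos.le
        rw [smul_eq_mul, ← mul_assoc] at this
        field_simp at this
        linarith [this]
      have h3 : (n : ℝ) * Real.negMulLog (e / n) = Real.negMulLog e + e * Real.log n := by
        rcases eq_or_lt_of_le he0 with he0' | hepos
        · simp [← he0']
        · rw [Real.negMulLog, Real.negMulLog, Real.log_div (ne_of_gt hepos) (ne_of_gt hnpos)]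
          field_simp
          ring
      have h4 : Real.log n ≤ Real.log (Fintype.card S) := by
        apply Real.log_le_log (by positivity)
        have : n ≤ Fintype.card S := by omega
        exact_mod_cast this
      calc ∑ s ∈ T, Real.negMulLog (p s) ≤ Real.negMulLog e + e * Real.log n := by
            rw [← h3]; exact h2
        _ ≤ Real.negMulLog e + e * Real.log (Fintype.card S) := by
            exact add_le_add_right (mul_le_mul_of_nonneg_left h4 he0) _
  linarith [key]
end
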